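/- Let (b^t) and (btil^t) be real sequences such that for every t, btil^t lies between 0 and b^t (that is, 0 <= btil^t <= b^t or b^t <= btil^t <= 0). Let (X^t, S^t) be the storage dynamics driven by input b and (Xtil^t, Stil^t) the storage dynamics driven by input btil, with the same capacity S > 0, leakage alpha in [0,1], and initial state S^0 = Stil^0 in [0,S]. Then for every T >= 0, the sum over t = 0,...,T of (|X^t| - |Xtil^t|) is at least |S^{T+1} - Stil^{T+1}|. -/
import Mathlib


/-- `clamp x l u` truncates `x` below by `l` and above by `u`. -/
noncomputable def clamp (x l u : ℝ) : ℝ := min (max x l) u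

/-- State of charge of a storage with capacity `S`, leakage factor `α`, and
initial state `S0`, driven by the input sequence of imbalances `b`:
`state 0 = S0` and `state (t+1) = α * state t + X t`, where
`X t = clamp (b t) (-(α * state t)) (S - α * state t)`. -/
noncomputable def state (S α S0 : ℝ) (b : ℕ → ℝ) : ℕ → ℝ
  | 0 => S0
  | t + 1 =>
      α * state S α S0 b t +
        clamp (b t) (-(α * state S α S0 b t)) (S - α * state S α S0 b t)

/-- Allocation of the storage at time `t`:
`X t = clamp (b t) (-(α * state t)) (S - α * state t)`. -/
noncomputable def alloc (S α S0 : ℝ) (b : ℕ → ℝ) (t : ℕ) : ℝ :=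
  clamp (b t) (-(α * state S α S0 b t)) (S - α * state S α S0 b t)

lemma clamp_mono (S a b : ℝ) (h : a ≤ b) : clamp a 0 S ≤ clamp b 0 S := by
  unfold clamp; simp only [min_def, max_def]; split_ifs <;> linarith

lemma clamp_lip (S a b : ℝ) (h : a ≤ b) : clamp b 0 S - clamp a 0 S ≤ b - a := by
  unfold clamp; simp only [min_def, max_def]; split_ifs <;> linarith

lemma clamp_id (S c : ℝ) (h0 : 0 ≤ c) (hS : c ≤ S) : clamp c 0 S = c := by
  unfold clamp; simp only [min_def, max_def]; split_ifs <;> linarith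

lemma clamp_key (S c d x y : ℝ)
    (hc0 : 0 ≤ c) (hcS : c ≤ S) (hd0 : 0 ≤ d) (hdS : d ≤ S)
    (hxy : (0 ≤ y ∧ y ≤ x) ∨ (x ≤ y ∧ y ≤ 0)) :
    |clamp (c + x) 0 S - clamp (d + y) 0 S| + |clamp (d + y) 0 S - d|
      ≤ |c - d| + |clamp (c + x) 0 S - c| := by
  set P := clamp (c + x) 0 S with hP
  set Q := clamp (d + y) 0 S with hQ
  have hcd : c - d ≤ |c - d| := le_abs_self _
  have hdc : -(c - d) ≤ |c - d| := neg_le_abs _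
  rcases hxy with ⟨h1, h2⟩ | ⟨h1, h2⟩
  · have hPc : c ≤ P := by
      rw [hP]; nth_rewrite 1 [← clamp_id S c hc0 hcS]; exact clamp_mono S _ _ (by linarith)
    have hQd : d ≤ Q := by
      rw [hQ]; nth_rewrite 1 [← clamp_id S d hd0 hdS]; exact clamp_mono S _ _ (by linarith)
    have fact : 2 * (Q - P) ≤ |c - d| + (d - c) := by
      rcases le_total c d with h | h
      · have e1 : Q ≤ clamp (d + x) 0 S := clamp_mono S _ _ (by linarith)
        have e2 : clamp (d + x) 0 S - clamp (c + x) 0 S ≤ (d + x) - (c + x) :=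
          clamp_lip S _ _ (by linarith)
        have : |c - d| = d - c := by rw [abs_of_nonpos (by linarith)]; ring
        linarith
      · have e1 : Q ≤ P := clamp_mono S _ _ (by linarith)
        linarith
    rw [abs_of_nonneg (by linarith : (0:ℝ) ≤ P - c), abs_of_nonneg (by linarith : (0:ℝ) ≤ Q - d)]
    rcases abs_cases (P - Q) with ⟨e, _⟩ | ⟨e, _⟩ <;> rw [e] <;> linarith
  · have hPc : P ≤ c := by
      rw [hP]; nth_rewrite 2 [← clamp_id S c hc0 hcS]; exact clamp_mono S _ _ (by linarith)
    have hQd : Q ≤ d := by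
      rw [hQ]; nth_rewrite 2 [← clamp_id S d hd0 hdS]; exact clamp_mono S _ _ (by linarith)
    have fact : 2 * (P - Q) ≤ |c - d| + (c - d) := by
      rcases le_total d c with h | h
      · have e1 : P ≤ clamp (c + y) 0 S := clamp_mono S _ _ (by linarith)
        have e2 : clamp (c + y) 0 S - clamp (d + y) 0 S ≤ (c + y) - (d + y) :=
          clamp_lip S _ _ (by linarith)
        have : |c - d| = c - d := abs_of_nonneg (by linarith)
        linarith
      · have e1 : P ≤ Q := clamp_mono S _ _ (by linarith)
        linarith
    rw [abs_of_nonpos (by linarith : P - c ≤ 0), abs_of_nonpos (by linarith : Q - d ≤ 0)]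
    rcases abs_cases (P - Q) with ⟨e, _⟩ | ⟨e, _⟩ <;> rw [e] <;> linarith

lemma state_succ (S α S0 : ℝ) (b : ℕ → ℝ) (t : ℕ) :
    state S α S0 b (t + 1) = clamp (α * state S α S0 b t + b t) 0 S := by
  show α * state S α S0 b t + clamp (b t) _ _ = _
  unfold clamp; simp only [min_def, max_def]; split_ifs <;> linarith

lemma alloc_eq (S α S0 : ℝ) (b : ℕ → ℝ) (t : ℕ) :
    alloc S α S0 b t = state S α S0 b (t + 1) - α * state S α S0 b t := by
  rw [show state S α S0 b (t+1) = α * state S α S0 b t + alloc S α S0 b t from rfl]; ring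

lemma clamp_mem (S z : ℝ) (hS : 0 ≤ S) : 0 ≤ clamp z 0 S ∧ clamp z 0 S ≤ S := by
  unfold clamp; constructor <;> [skip; exact min_le_right _ _]
  exact le_min (le_max_right _ _) hS

lemma state_mem (S α S0 : ℝ) (hS : 0 ≤ S) (hS0 : 0 ≤ S0) (hS0' : S0 ≤ S) (b : ℕ → ℝ) :
    ∀ t, 0 ≤ state S α S0 b t ∧ state S α S0 b t ≤ S := by
  intro t
  induction t with
  | zero => exact ⟨hS0, hS0'⟩
  | succ n ih => rw [state_succ]; exact clamp_mem S _ hS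

/-- If for every `t` the input `btil t` lies between `0` and `b t`, then for
every `T ≥ 0` the sum over `t = 0, …, T` of `|X t| - |Xtil t|` is at least
`|S^{T+1} - Stil^{T+1}|`, where `(X, S)` are the dynamics driven by `b` and
`(Xtil, Stil)` those driven by `btil`. -/
theorem excess_allocation_bounds_state_gap
    (S α S0 : ℝ) (hS : 0 < S) (hα : α ∈ Set.Icc (0 : ℝ) 1)
    (hS0 : S0 ∈ Set.Icc 0 S) (b btil : ℕ → ℝ)
    (hb : ∀ t, (0 ≤ btil t ∧ btil t ≤ b t) ∨ (b t ≤ btil t ∧ btil t ≤ 0))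
    (T : ℕ) :
    |state S α S0 b (T + 1) - state S α S0 btil (T + 1)|
      ≤ ∑ t ∈ Finset.range (T + 1), (|alloc S α S0 b t| - |alloc S α S0 btil t|) := by
  obtain ⟨hα0, hα1⟩ := hα
  obtain ⟨h00, h0S⟩ := hS0
  have hSnn : (0:ℝ) ≤ S := le_of_lt hS
  -- per-step facts
  have step : ∀ T : ℕ,
      |state S α S0 b (T + 1) - state S α S0 btil (T + 1)|
        + |alloc S α S0 btil T|
      ≤ |α * state S α S0 b T - α * state S α S0 btil T| + |alloc S α S0 b T| := by
    intro t
    obtain ⟨hs0, hsS⟩ := state_mem S α S0 hSnn h00 h0S b t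
    obtain ⟨ht0, htS⟩ := state_mem S α S0 hSnn h00 h0S btil t
    have hc0 : 0 ≤ α * state S α S0 b t := mul_nonneg hα0 hs0
    have hcS : α * state S α S0 b t ≤ S := by nlinarith
    have hd0 : 0 ≤ α * state S α S0 btil t := mul_nonneg hα0 ht0
    have hdS : α * state S α S0 btil t ≤ S := by nlinarith
    have key := clamp_key S (α * state S α S0 b t) (α * state S α S0 btil t)
      (b t) (btil t) hc0 hcS hd0 hdS (hb t)
    rw [state_succ S α S0 b t, state_succ S α S0 btil t,
      alloc_eq S α S0 b t, alloc_eq S α S0 btil t,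
      state_succ S α S0 b t, state_succ S α S0 btil t]
    exact key
  induction T with
  | zero =>
    have h := step 0
    rw [show Finset.range (0+1) = Finset.range 1 from rfl, Finset.sum_range_one]
    have : α * state S α S0 b 0 - α * state S α S0 btil 0 = 0 := by
      show α * S0 - α * S0 = 0; ring
    rw [this, abs_zero] at h
    linarith [abs_nonneg (alloc S α S0 btil 0)]
  | succ n ih =>
    have h := step (n + 1)
    rw [Finset.sum_range_succ]
    have hcontr : |α * state S α S0 b (n+1) - α * state S α S0 btil (n+1)|
        ≤ |state S α S0 b (n+1) - state S α S0 btil (n+1)| := by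
      rw [show α * state S α S0 b (n+1) - α * state S α S0 btil (n+1)
          = α * (state S α S0 b (n+1) - state S α S0 btil (n+1)) by ring,
        abs_mul, abs_of_nonneg hα0]
      nlinarith [abs_nonneg (state S α S0 b (n+1) - state S α S0 btil (n+1))]
    linarith
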